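/- (Monotonicity of the Higgs field.) Let (a0, a+, a−, φ) be a solution of the Stenzel monopole ODE system on [t*, T] ⊂ (0,∞). If φ(t*) > 0 and φ'(t*) > 0, then φ(t) > 0 and φ'(t) > 0 for all t ∈ [t*, T]; likewise, if φ(t*) < 0 and φ'(t*) < 0, then φ(t) < 0 and φ'(t) < 0 for all t ∈ [t*, T]. -/

import Mathlib

open Set

/-- The hypotheses on the functions `λ, μ, v0, v3` encoding the Stenzel Calabi–Yau
structure on `T*S³`: they are C¹ on `(0,∞)`, satisfy `λ > 0`, `μ > 0`, `v3 − v0 > 0`,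
`v3 + v0 > 0`, `v0 < 0`, `μ² = v3² − v0²`, and the hypo-evolution equations
`μ' = 2λ`, `(μλ)' = 3v3`, `(λv3)' = 3μ`, `(λv0)' = 0`. -/
def StenzelHypo (lam mu v0 v3 : ℝ → ℝ) : Prop :=
  ContDiffOn ℝ 1 lam (Ioi 0) ∧ ContDiffOn ℝ 1 mu (Ioi 0) ∧
  ContDiffOn ℝ 1 v0 (Ioi 0) ∧ ContDiffOn ℝ 1 v3 (Ioi 0) ∧
  (∀ t ∈ Ioi (0 : ℝ), 0 < lam t ∧ 0 < mu t ∧ 0 < v3 t - v0 t ∧ 0 < v3 t + v0 t ∧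
    v0 t < 0 ∧ mu t ^ 2 = v3 t ^ 2 - v0 t ^ 2) ∧
  (∀ t ∈ Ioi (0 : ℝ),
    HasDerivAt mu (2 * lam t) t ∧
    HasDerivAt (fun s => mu s * lam s) (3 * v3 t) t ∧
    HasDerivAt (fun s => lam s * v3 s) (3 * mu t) t ∧
    HasDerivAt (fun s => lam s * v0 s) 0 t)

/-- A solution of the Stenzel monopole ODE system:
`a0' = (4λ/μ)(a₊a₋ − a0)`,
`a₊' = (3(v3 + v0)/(2λμ))(a0a₋ − a₊) − 2a₊φ`,
`a₋' = (3(v3 − v0)/(2λμ))(a0a₊ − a₋) + 2a₋φ`,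
`φ' = (3/μ²)(((a₊² + a₋²)/2 − 1)v0 − ((a₊² − a₋²)/2)v3)`. -/
def IsSolStenzelMonopole (lam mu v0 v3 a0 ap am phi : ℝ → ℝ) (s : Set ℝ) : Prop :=
  ∀ t ∈ s,
    HasDerivAt a0 (4 * lam t / mu t * (ap t * am t - a0 t)) t ∧
    HasDerivAt ap (3 * (v3 t + v0 t) / (2 * lam t * mu t) * (a0 t * am t - ap t)
      - 2 * ap t * phi t) t ∧
    HasDerivAt am (3 * (v3 t - v0 t) / (2 * lam t * mu t) * (a0 t * ap t - am t)
      + 2 * am t * phi t) t ∧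
    HasDerivAt phi (3 / mu t ^ 2 * (((ap t ^ 2 + am t ^ 2) / 2 - 1) * v0 t
      - (ap t ^ 2 - am t ^ 2) / 2 * v3 t)) t

lemma key_lemma (p g r c : ℝ → ℝ) (tstar T : ℝ)
    (hp : ∀ t ∈ Icc tstar T, HasDerivAt p (r t) t)
    (hg : ∀ t ∈ Icc tstar T, HasDerivAt g (c t * p t) t)
    (hc : ∀ t ∈ Icc tstar T, 0 ≤ c t)
    (hr : ∀ t ∈ Icc tstar T, 0 < g t → 0 < r t)
    (h0 : 0 < p tstar) (h0' : 0 < g tstar) :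
    ∀ t ∈ Icc tstar T, 0 < p t ∧ 0 < g t := by
  by_contra hcon
  push_neg at hcon
  obtain ⟨t0, ht0, hbad⟩ := hcon
  set B : Set ℝ := {t | t ∈ Icc tstar T ∧ (p t ≤ 0 ∨ g t ≤ 0)} with hBdef
  have hpc : ContinuousOn p (Icc tstar T) := fun x hx => ((hp x hx).continuousAt).continuousWithinAt
  have hgc : ContinuousOn g (Icc tstar T) := fun x hx => ((hg x hx).continuousAt).continuousWithinAt
  have hBclosed : IsClosed B := by
    have : B = (Icc tstar T ∩ p ⁻¹' Iic 0) ∪ (Icc tstar T ∩ g ⁻¹' Iic 0) := by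
      ext x; simp [hBdef, and_or_left]
    rw [this]
    exact (hpc.preimage_isClosed_of_isClosed isClosed_Icc isClosed_Iic).union
      (hgc.preimage_isClosed_of_isClosed isClosed_Icc isClosed_Iic)
  have hBne : B.Nonempty := by
    refine ⟨t0, ht0, ?_⟩
    rcases le_or_gt (p t0) 0 with h | h
    · exact Or.inl h
    · exact Or.inr (hbad h)
  have hBbdd : BddBelow B := ⟨tstar, fun x hx => hx.1.1⟩
  set τ := sInf B with hτdef
  have hτB : τ ∈ B := hBclosed.csInf_mem hBne hBbdd
  have hτI : τ ∈ Icc tstar T := hτB.1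
  have hτlt : tstar < τ := by
    rcases lt_or_eq_of_le hτI.1 with h | h
    · exact h
    · exfalso
      rcases hτB.2 with h' | h' <;> rw [← h] at h'
      · exact absurd h0 (not_lt.2 h')
      · exact absurd h0' (not_lt.2 h')
  have hsub : Icc tstar τ ⊆ Icc tstar T := Icc_subset_Icc le_rfl hτI.2
  have hgood : ∀ s, tstar ≤ s → s < τ → 0 < p s ∧ 0 < g s := by
    intro s hs1 hs2
    have hsI : s ∈ Icc tstar T := ⟨hs1, hs2.le.trans hτI.2⟩
    have hsB : s ∉ B := fun h => absurd (csInf_le hBbdd h) (not_le.2 hs2)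
    by_contra h
    rw [not_and_or, not_lt, not_lt] at h
    exact hsB ⟨hsI, h⟩
  have hgmono : MonotoneOn g (Icc tstar τ) := by
    apply monotoneOn_of_deriv_nonneg (convex_Icc _ _) (hgc.mono hsub)
    · intro x hx
      rw [interior_Icc] at hx
      exact ((hg x (hsub ⟨hx.1.le, hx.2.le⟩)).differentiableAt).differentiableWithinAt
    · intro x hx
      rw [interior_Icc] at hx
      have hxI := hsub ⟨hx.1.le, hx.2.le⟩
      rw [(hg x hxI).deriv]
      exact mul_nonneg (hc x hxI) (hgood x hx.1.le hx.2).1.le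
  have hgτ : 0 < g τ :=
    h0'.trans_le (hgmono ⟨le_rfl, hτlt.le⟩ ⟨hτlt.le, le_rfl⟩ hτlt.le)
  have hpmono : StrictMonoOn p (Icc tstar τ) := by
    apply strictMonoOn_of_deriv_pos (convex_Icc _ _) (hpc.mono hsub)
    intro x hx
    rw [interior_Icc] at hx
    have hxI := hsub ⟨hx.1.le, hx.2.le⟩
    rw [(hp x hxI).deriv]
    exact hr x hxI (hgood x hx.1.le hx.2).2
  have hpτ : 0 < p τ := h0.trans (hpmono ⟨le_rfl, hτlt.le⟩ ⟨hτlt.le, le_rfl⟩ hτlt)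
  rcases hτB.2 with h | h
  · exact absurd hpτ (not_lt.2 h)
  · exact absurd hgτ (not_lt.2 h)



/-- Monotonicity of the Higgs field: for a solution of the Stenzel monopole ODE system on
`[t*, T] ⊂ (0,∞)`, if `φ(t*) > 0` and `φ'(t*) > 0` then `φ > 0` and `φ' > 0` on all of
`[t*, T]`; likewise with all the signs reversed. -/
theorem higgs_monotonicity (lam mu v0 v3 a0 ap am phi : ℝ → ℝ)
    (hhypo : StenzelHypo lam mu v0 v3)
    (tstar T : ℝ) (hts : 0 < tstar) (htT : tstar ≤ T)
    (hsol : IsSolStenzelMonopole lam mu v0 v3 a0 ap am phi (Icc tstar T)) :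
    ((0 < phi tstar ∧ 0 < deriv phi tstar) →
      ∀ t ∈ Icc tstar T, 0 < phi t ∧ 0 < deriv phi t) ∧
    ((phi tstar < 0 ∧ deriv phi tstar < 0) →
      ∀ t ∈ Icc tstar T, phi t < 0 ∧ deriv phi t < 0) := by
  obtain ⟨-, -, -, -, hpos, hev⟩ := hhypo
  -- notation
  set F : ℝ → ℝ := fun t => ((ap t ^ 2 + am t ^ 2) / 2 - 1) * v0 t
      - (ap t ^ 2 - am t ^ 2) / 2 * v3 t with hF
  set r : ℝ → ℝ := fun t => 3 / mu t ^ 2 * F t with hr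
  set G : ℝ → ℝ := fun t => ap t ^ 2 / 2 * (lam t * v0 t - lam t * v3 t)
      + am t ^ 2 / 2 * (lam t * v0 t + lam t * v3 t) - lam t * v0 t with hG
  set c : ℝ → ℝ := fun t => 2 * lam t * (ap t ^ 2 * (v3 t - v0 t) + am t ^ 2 * (v3 t + v0 t))
      with hc
  have hIoi : ∀ t ∈ Icc tstar T, t ∈ Ioi (0:ℝ) := fun t ht => lt_of_lt_of_le hts ht.1
  have hGlam : ∀ t, G t = lam t * F t := by intro t; simp only [hG, hF]; ring
  -- derivative of G
  have hGderiv : ∀ t ∈ Icc tstar T, HasDerivAt G (c t * phi t) t := by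
    intro t ht
    obtain ⟨hlam, hmu, hv30, hv30', hv0neg, hmu2⟩ := hpos t (hIoi t ht)
    obtain ⟨-, -, hL3, hL0⟩ := hev t (hIoi t ht)
    obtain ⟨-, hap, ham, -⟩ := hsol t ht
    have hap2 : HasDerivAt (fun s => ap s ^ 2 / 2)
        (ap t * (3 * (v3 t + v0 t) / (2 * lam t * mu t) * (a0 t * am t - ap t)
          - 2 * ap t * phi t)) t := by
      have := (hap.fun_pow 2).div_const 2
      exact this.congr_deriv (by ring)
    have ham2 : HasDerivAt (fun s => am s ^ 2 / 2)
        (am t * (3 * (v3 t - v0 t) / (2 * lam t * mu t) * (a0 t * ap t - am t)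
          + 2 * am t * phi t)) t := by
      have := (ham.fun_pow 2).div_const 2
      exact this.congr_deriv (by ring)
    have hD := ((hap2.fun_mul (hL0.fun_sub hL3)).fun_add (ham2.fun_mul (hL0.fun_add hL3))).fun_sub hL0
    refine hD.congr_deriv (Eq.symm ?_)
    have hlne : lam t ≠ 0 := hlam.ne'
    have hmne : mu t ≠ 0 := hmu.ne'
    simp only [hc]
    field_simp
    linear_combination (3 * (ap t ^ 2 - am t ^ 2)) * hmu2

  have hphider : ∀ t ∈ Icc tstar T, HasDerivAt phi (r t) t := fun t ht => (hsol t ht).2.2.2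
  have hFpos : ∀ t ∈ Icc tstar T, 0 < G t → 0 < r t := by
    intro t ht hGt
    obtain ⟨hlam, hmu, -, -, -, -⟩ := hpos t (hIoi t ht)
    have hFt : 0 < F t := by
      rw [hGlam] at hGt
      by_contra h
      push_neg at h
      exact absurd hGt (not_lt.2 (mul_nonpos_of_nonneg_of_nonpos hlam.le h))
    exact mul_pos (by positivity) hFt
  have hFneg : ∀ t ∈ Icc tstar T, 0 < -G t → 0 < -r t := by
    intro t ht hGt
    obtain ⟨hlam, hmu, -, -, -, -⟩ := hpos t (hIoi t ht)
    have hFt : 0 < -F t := by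
      rw [hGlam] at hGt
      by_contra h
      push_neg at h
      have : 0 ≤ F t := by linarith
      exact absurd hGt (not_lt.2 (by nlinarith))
    have : 0 < 3 / mu t ^ 2 * (-F t) := mul_pos (by positivity) hFt
    simp only [hr]; linarith [this]
  have hcnn : ∀ t ∈ Icc tstar T, 0 ≤ c t := by
    intro t ht
    obtain ⟨hlam, -, hv30, hv30', -, -⟩ := hpos t (hIoi t ht)
    have : 0 ≤ ap t ^ 2 * (v3 t - v0 t) + am t ^ 2 * (v3 t + v0 t) :=
      add_nonneg (mul_nonneg (sq_nonneg _) hv30.le) (mul_nonneg (sq_nonneg _) hv30'.le)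
    simp only [hc]; positivity
  have hderiv_eq : ∀ t ∈ Icc tstar T, deriv phi t = r t := fun t ht => (hphider t ht).deriv
  have htsI : tstar ∈ Icc tstar T := ⟨le_rfl, htT⟩
  constructor
  · rintro ⟨hp0, hp0'⟩
    have hG0 : 0 < G tstar := by
      rw [hderiv_eq tstar htsI, hr] at hp0'
      obtain ⟨hlam, hmu, -, -, -, -⟩ := hpos tstar (hIoi tstar htsI)
      have hFt : 0 < F tstar := by
        by_contra h
        push_neg at h
        have : 3 / mu tstar ^ 2 * F tstar ≤ 0 :=
          mul_nonpos_of_nonneg_of_nonpos (by positivity) h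
        linarith
      rw [hGlam]; exact mul_pos hlam hFt
    have := key_lemma phi G r c tstar T hphider hGderiv hcnn hFpos hp0 hG0
    intro t ht
    refine ⟨(this t ht).1, ?_⟩
    rw [hderiv_eq t ht]
    exact hFpos t ht (this t ht).2
  · rintro ⟨hp0, hp0'⟩
    have hG0 : 0 < -G tstar := by
      rw [hderiv_eq tstar htsI, hr] at hp0'
      obtain ⟨hlam, hmu, -, -, -, -⟩ := hpos tstar (hIoi tstar htsI)
      have hFt : F tstar < 0 := by
        by_contra h
        push_neg at h
        have : 0 ≤ 3 / mu tstar ^ 2 * F tstar := mul_nonneg (by positivity) h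
        linarith
      rw [hGlam]
      have := mul_pos hlam (neg_pos.2 hFt)
      linarith [this]
    have hphider' : ∀ t ∈ Icc tstar T, HasDerivAt (fun s => -phi s) (-r t) t :=
      fun t ht => (hphider t ht).neg
    have hGderiv' : ∀ t ∈ Icc tstar T, HasDerivAt (fun s => -G s) (c t * (-phi t)) t := by
      intro t ht
      have := (hGderiv t ht).fun_neg
      exact this.congr_deriv (by ring)
    have hFneg' : ∀ t ∈ Icc tstar T, 0 < (fun s => -G s) t → 0 < -r t := fun t ht h =>
      hFneg t ht h
    have := key_lemma (fun s => -phi s) (fun s => -G s) (fun s => -r s) c tstar T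
      hphider' hGderiv' hcnn hFneg' (by simpa using hp0) (by simpa using hG0)
    intro t ht
    obtain ⟨h1, h2⟩ := this t ht
    refine ⟨by simpa using h1, ?_⟩
    rw [hderiv_eq t ht]
    have := hFneg t ht (by simpa using h2)
    linarith
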